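/- Theorem 1 (decrease outside the ball): Consider the swarm model x_i(k+1) = x_i(k) + Σ_{j≠i} g(x_i(k) − x_j(k)) with g(y) = −y(a − b·exp(−‖y‖²/c)), positive constants a, b, c with b > a, under the hypotheses guaranteeing the decrease estimate V_i(k+1) − V_i(k) ≤ −2a·V_i(k) whenever ‖e_i(k)‖ ≥ δ (all pairwise distances exceeding δ at all times and a − (a² + b²Φ²)M²/(2(M−1)) > 0 with Φ = a/b). Let ε = (b/a)·√(c/2)·exp(−1/2). Then for every agent i, whenever ‖e_i(k)‖ ≥ ε one has V_i(k+1) − V_i(k) ≤ 0; consequently as k → ∞ each e_i(k) converges into the ball B_ε(x̄) = {x : ‖x − x̄‖ ≤ ε}. -/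

import Mathlib

/-- Attraction–repulsion function `g(y) = −y(a − b·exp(−‖y‖²/c))` on ℝⁿ. -/
noncomputable def g (a b c : ℝ) {n : ℕ} (y : EuclideanSpace ℝ (Fin n)) :
    EuclideanSpace ℝ (Fin n) :=
  (-(a - b * Real.exp (-‖y‖ ^ 2 / c))) • y

/-!
Split `g(y) = -a y + b e^{-‖y‖²/c} y`. Since `g` is odd the swarm centre is invariant, and then
the linear parts of the update of agent `i` add up to `-aM e_i`, while each of the `M - 1`
remaining terms has norm at most `b · max_t t e^{-t²/c} = b √(c/2) e^{-1/2} = a ε`. Hence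
`‖e_i(k+1)‖ ≤ (1 - aM) ‖e_i(k)‖ + (M - 1) a ε`, and the hypothesis on `a` forces `aM < 1`.
Outside the ball this gives `‖e_i(k+1)‖ ≤ (1 - a) ‖e_i(k)‖`, inside it keeps `e_i` in the ball,
so `‖e_i(k)‖ ≤ max ε ((1 - a)^k ‖e_i(0)‖)`.
-/

open Finset Filter Real

lemma mul_exp_neg_sq_div_le {c : ℝ} (hc : 0 < c) (t : ℝ) :
    t * exp (-t ^ 2 / c) ≤ √(c / 2) * exp (-(1 / 2)) := by
  set s := √(c / 2)
  have hs : 0 < s := sqrt_pos.mpr (by positivity)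
  have hs2 : s ^ 2 = c / 2 := sq_sqrt (by positivity)
  -- `e^z ≥ 1 + z` at `z = t²/c - 1/2` gives `s e^z ≥ (t² + s²) / (2s) ≥ t`.
  have ht : t ≤ s * exp (t ^ 2 / c - 1 / 2) := by
    have hexp := add_one_le_exp (t ^ 2 / c - 1 / 2)
    have hlin : t ≤ s * (t ^ 2 / c - 1 / 2 + 1) := by
      rw [show c = 2 * s ^ 2 by linarith]
      field_simp
      nlinarith [sq_nonneg (t - s)]
    nlinarith
  calc t * exp (-t ^ 2 / c)
      ≤ s * exp (t ^ 2 / c - 1 / 2) * exp (-t ^ 2 / c) := by gcongr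
    _ = s * exp (-(1 / 2)) := by rw [mul_assoc, ← exp_add]; ring_nf

lemma norm_exp_neg_sq_div_smul_le {E : Type*} [SeminormedAddCommGroup E] [NormedSpace ℝ E]
    {b c : ℝ} (hb : 0 ≤ b) (hc : 0 < c) (y : E) :
    ‖(b * exp (-‖y‖ ^ 2 / c)) • y‖ ≤ b * (√(c / 2) * exp (-(1 / 2))) := by
  rw [norm_smul, norm_of_nonneg (by positivity), mul_assoc, mul_comm (exp _)]
  exact mul_le_mul_of_nonneg_left (mul_exp_neg_sq_div_le hc _) hb

lemma mul_lt_one_of_margin_pos {M : ℕ} (hM : 2 ≤ M) {a b : ℝ} (ha : 0 < a) (hb : b ≠ 0)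
    (hκ : 0 < a - (a ^ 2 + b ^ 2 * (a / b) ^ 2) * (M : ℝ) ^ 2 / (2 * ((M : ℝ) - 1))) :
    a * M < 1 := by
  have hM' : (2 : ℝ) ≤ M := by exact_mod_cast hM
  have hΦ : a ^ 2 + b ^ 2 * (a / b) ^ 2 = 2 * a ^ 2 := by field_simp; ring
  rw [hΦ, sub_pos, div_lt_iff₀ (by linarith)] at hκ
  have hsq : a * M ^ 2 < M - 1 := by nlinarith
  nlinarith

lemma sum_sum_erase_eq_zero_of_antisymm {ι M : Type*} [Fintype ι] [DecidableEq ι]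
    [AddCommMonoid M] (f : ι → ι → M) (hf : ∀ i j, f i j + f j i = 0) :
    ∑ i, ∑ j ∈ univ.erase i, f i j = 0 := by
  rw [← sum_finset_product' univ.offDiag univ (fun i => univ.erase i) (by simp [ne_comm])]
  exact sum_involution (fun p _ => p.swap) (fun p _ => hf _ _)
    (fun p hp _ h => by simp only [mem_offDiag] at hp; exact hp.2.2 (congrArg Prod.snd h))
    (fun p hp => by simpa [ne_comm] using hp)
    (fun p _ => p.swap_swap)

lemma sum_erase_sub_eq {ι E : Type*} [Fintype ι] [DecidableEq ι] [AddCommGroup E]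
    (z : ι → E) (i : ι) :
    ∑ j ∈ univ.erase i, (z i - z j) = Fintype.card ι • z i - ∑ j, z j := by
  rw [sum_erase _ (sub_self _), sum_sub_distrib, sum_const, card_univ]

section Swarm

variable {ι : Type*} [Fintype ι] [DecidableEq ι] {n : ℕ}

lemma g_neg (a b c : ℝ) (y : EuclideanSpace ℝ (Fin n)) : g a b c (-y) = -g a b c y := by
  simp [g, smul_neg]

lemma g_eq_neg_smul_add_smul (a b c : ℝ) (y : EuclideanSpace ℝ (Fin n)) :
    g a b c y = (-a) • y + (b * exp (-‖y‖ ^ 2 / c)) • y := by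
  rw [g, ← add_smul]
  ring_nf

lemma sum_add_sum_erase_g (a b c : ℝ) (z : ι → EuclideanSpace ℝ (Fin n)) :
    ∑ i, (z i + ∑ j ∈ univ.erase i, g a b c (z i - z j)) = ∑ i, z i := by
  rw [sum_add_distrib, sum_sum_erase_eq_zero_of_antisymm, add_zero]
  intro i j
  rw [← neg_sub (z i), g_neg, add_neg_cancel]

lemma norm_add_sum_erase_g_sub_le {a b c : ℝ} (hb : 0 ≤ b) (hc : 0 < c)
    (haN : a * Fintype.card ι ≤ 1) (z : ι → EuclideanSpace ℝ (Fin n))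
    {w : EuclideanSpace ℝ (Fin n)} (hw : (Fintype.card ι : ℝ) • w = ∑ j, z j) (i : ι) :
    ‖z i + ∑ j ∈ univ.erase i, g a b c (z i - z j) - w‖
      ≤ (1 - a * Fintype.card ι) * ‖z i - w‖
        + (Fintype.card ι - 1) * (b * (√(c / 2) * exp (-(1 / 2)))) := by
  set N := Fintype.card ι
  have hlin : ∑ j ∈ univ.erase i, (z i - z j) = (N : ℝ) • (z i - w) := by
    rw [sum_erase_sub_eq, ← hw, ← Nat.cast_smul_eq_nsmul ℝ, smul_sub]
  have hsplit : z i + ∑ j ∈ univ.erase i, g a b c (z i - z j) - w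
      = (1 - a * N) • (z i - w)
        + ∑ j ∈ univ.erase i, (b * exp (-‖z i - z j‖ ^ 2 / c)) • (z i - z j) := by
    simp_rw [g_eq_neg_smul_add_smul, sum_add_distrib, ← smul_sum, hlin]
    module
  have hcard : ((univ.erase i).card : ℝ) = N - 1 := by
    rw [card_erase_of_mem (mem_univ i), card_univ, Nat.cast_pred (Fintype.card_pos_iff.mpr ⟨i⟩)]
  rw [hsplit]
  calc _ ≤ ‖(1 - a * N) • (z i - w)‖
          + ∑ j ∈ univ.erase i, ‖(b * exp (-‖z i - z j‖ ^ 2 / c)) • (z i - z j)‖ :=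
        norm_add_le_of_le le_rfl (norm_sum_le _ _)
    _ ≤ (1 - a * N) * ‖z i - w‖
          + ∑ j ∈ univ.erase i, b * (√(c / 2) * exp (-(1 / 2))) := by
        rw [norm_smul, norm_of_nonneg (by linarith)]
        gcongr with j
        exact norm_exp_neg_sq_div_smul_le hb hc _
    _ = _ := by rw [sum_const, nsmul_eq_mul, hcard]

end Swarm

section Recurrence

variable {u : ℕ → ℝ} {p r ε : ℝ} (hu : ∀ k, u (k + 1) ≤ p * u k + r * ε)
include hu

lemma le_mul_of_affine_step (hr : 0 ≤ r) {k : ℕ} (hk : ε ≤ u k) :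
    u (k + 1) ≤ (p + r) * u k := by
  nlinarith [hu k]

lemma le_max_of_affine_step (hp : 0 ≤ p) (hr : 0 ≤ r) (hpr : p + r ≤ 1) (hε : 0 ≤ ε)
    (k : ℕ) :
    u (k + 1) ≤ max ε ((p + r) * u k) := by
  rcases le_total ε (u k) with hk | hk
  · exact (le_mul_of_affine_step hu hr hk).trans (le_max_right _ _)
  · refine le_max_of_le_left ?_
    nlinarith [hu k]

lemma le_max_pow_of_affine_step (hp : 0 ≤ p) (hr : 0 ≤ r) (hpr : p + r ≤ 1) (hε : 0 ≤ ε)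
    (k : ℕ) :
    u k ≤ max ε ((p + r) ^ k * u 0) := by
  induction k with
  | zero => simp
  | succ k ih =>
    have hθ : 0 ≤ p + r := by positivity
    calc u (k + 1) ≤ max ε ((p + r) * u k) := le_max_of_affine_step hu hp hr hpr hε k
      _ ≤ max ε ((p + r) * max ε ((p + r) ^ k * u 0)) := by gcongr
      _ = max (max ε ((p + r) * ε)) ((p + r) ^ (k + 1) * u 0) := by
        rw [mul_max_of_nonneg _ _ hθ, pow_succ', mul_assoc, max_assoc]
      _ = max ε ((p + r) ^ (k + 1) * u 0) := by
        rw [max_eq_left (show (p + r) * ε ≤ ε by nlinarith)]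

lemma eventually_le_of_affine_step (hp : 0 ≤ p) (hr : 0 ≤ r) (hpr : p + r < 1) (hε : 0 < ε) :
    ∀ᶠ k in atTop, u k ≤ ε := by
  have hpow : Tendsto (fun k => (p + r) ^ k * u 0) atTop (nhds 0) := by
    simpa using (tendsto_pow_atTop_nhds_zero_of_lt_one (by positivity) hpr).mul_const (u 0)
  filter_upwards [hpow.eventually_lt_const hε] with k hk
  exact (le_max_pow_of_affine_step hu hp hr hpr.le hε.le k).trans (max_le le_rfl hk.le)

end Recurrence

theorem theorem1_decrease_outside_ball_general {n M : ℕ} (hM : 2 ≤ M) (a b c : ℝ)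
    (ha : 0 < a) (hb : 0 < b) (hc : 0 < c)
    (x : ℕ → Fin M → EuclideanSpace ℝ (Fin n))
    (hdyn : ∀ k i, x (k + 1) i =
      x k i + ∑ j ∈ Finset.univ.erase i, g a b c (x k i - x k j))
    (hκ : 0 < a - (a ^ 2 + b ^ 2 * (a / b) ^ 2) * (M : ℝ) ^ 2 / (2 * ((M : ℝ) - 1))) :
    let ε : ℝ := b / a * Real.sqrt (c / 2) * Real.exp (-(1 / 2 : ℝ))
    let xbar : EuclideanSpace ℝ (Fin n) := (M : ℝ)⁻¹ • ∑ j, x 0 j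
    (∀ (i : Fin M) (k : ℕ), ε ≤ ‖x k i - xbar‖ →
      (1 / 2) * ‖x (k + 1) i - xbar‖ ^ 2 - (1 / 2) * ‖x k i - xbar‖ ^ 2 ≤ 0) ∧
    (∀ i : Fin M, ∀ᶠ k in Filter.atTop, ‖x k i - xbar‖ ≤ ε) := by
  intro ε xbar
  have haM : a * M < 1 := mul_lt_one_of_margin_pos hM ha hb.ne' hκ
  have hM1 : (1 : ℝ) ≤ M := by exact_mod_cast (by omega : 1 ≤ M)
  have hcentre : ∀ k, (M : ℝ) • xbar = ∑ j, x k j := by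
    intro k
    induction k with
    | zero => exact smul_inv_smul₀ (by positivity : (M : ℝ) ≠ 0) _
    | succ k ih => simp_rw [hdyn k]; rw [sum_add_sum_erase_g, ih]
  have haε : a * ε = b * (√(c / 2) * exp (-(1 / 2))) := by
    simp only [ε]
    field_simp
  have hstep : ∀ i k, ‖x (k + 1) i - xbar‖
      ≤ (1 - a * M) * ‖x k i - xbar‖ + ((M - 1) * a) * ε := by
    intro i k
    rw [hdyn, mul_assoc, haε]
    simpa using norm_add_sum_erase_g_sub_le hb.le hc (by simpa using haM.le) (x k)
      (by simpa using hcentre k) i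
  have hp : 0 ≤ 1 - a * M := by linarith
  have hr : 0 ≤ (M - 1) * a := by nlinarith
  have hθ : 1 - a * M + (M - 1) * a = 1 - a := by ring
  refine ⟨fun i k hk => ?_, fun i => ?_⟩
  · have hdecr := le_mul_of_affine_step (u := fun k => ‖x k i - xbar‖) (hstep i) hr hk
    rw [hθ] at hdecr
    have hle : ‖x (k + 1) i - xbar‖ ≤ ‖x k i - xbar‖ := by
      nlinarith [norm_nonneg (x k i - xbar)]
    nlinarith [norm_nonneg (x (k + 1) i - xbar)]
  · exact eventually_le_of_affine_step (hstep i) hp hr (by linarith) (by positivity)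

/-- Theorem 1, decrease outside the ball: under Assumption 1
(all pairwise distances exceed `δ = √(c·ln(b/a))` at all times) and
`a − (a²+b²Φ²)M²/(2(M−1)) > 0` with `Φ = a/b`, setting
`ε = (b/a)·√(c/2)·exp(−1/2)`: whenever `‖e_i(k)‖ ≥ ε` one has
`V_i(k+1) − V_i(k) ≤ 0`, and consequently each `e_i(k)` eventually lies in the
ball `B_ε(x̄)`. -/
theorem theorem1_decrease_outside_ball {n M : ℕ} (hM : 2 ≤ M) (a b c : ℝ)
    (ha : 0 < a) (hb : 0 < b) (hc : 0 < c) (hba : a < b)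
    (x : ℕ → Fin M → EuclideanSpace ℝ (Fin n))
    (hdyn : ∀ k i, x (k + 1) i =
      x k i + ∑ j ∈ Finset.univ.erase i, g a b c (x k i - x k j))
    (hsep : ∀ (k : ℕ) (i j : Fin M), i ≠ j →
      Real.sqrt (c * Real.log (b / a)) < ‖x k i - x k j‖)
    (hκ : 0 < a - (a ^ 2 + b ^ 2 * (a / b) ^ 2) * (M : ℝ) ^ 2 / (2 * ((M : ℝ) - 1))) :
    let ε : ℝ := b / a * Real.sqrt (c / 2) * Real.exp (-(1 / 2 : ℝ))
    let xbar : EuclideanSpace ℝ (Fin n) := (M : ℝ)⁻¹ • ∑ j, x 0 j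
    (∀ (i : Fin M) (k : ℕ), ε ≤ ‖x k i - xbar‖ →
      (1 / 2) * ‖x (k + 1) i - xbar‖ ^ 2 - (1 / 2) * ‖x k i - xbar‖ ^ 2 ≤ 0) ∧
    (∀ i : Fin M, ∀ᶠ k in Filter.atTop, ‖x k i - xbar‖ ≤ ε) :=
  theorem1_decrease_outside_ball_general hM a b c ha hb hc x hdyn hκ
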